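/- An operator T is n-quasinormal if and only if T*^{nk} T^{nk} = (T*ⁿ Tⁿ)ᵏ for all k = 0, 1, 2, … -/
import Mathlib

theorem quasi_aux {A : Type*} [NormedRing A] [StarRing A] [CStarRing A] (S C : A)
    (hC : star C = C) (k1 : star S * S = C)
    (k2 : star S * C * S = C * C) (k3 : star S * (C * C) * S = C * (C * C)) :
    C * S = S * C := by
  have hD : star (C * S - S * C) * (C * S - S * C) = 0 := by
    have e : star (C * S - S * C) = star S * C - C * star S := by
      rw [star_sub, star_mul, star_mul, hC]
    rw [e, sub_mul, mul_sub, mul_sub]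
    have t1 : star S * C * (C * S) = C * (C * C) := by
      rw [← k3]; noncomm_ring
    have t2 : star S * C * (S * C) = C * (C * C) := by
      rw [← mul_assoc, k2]; noncomm_ring
    have t3 : C * star S * (C * S) = C * (C * C) := by
      rw [mul_assoc, ← mul_assoc (star S), k2]
    have t4 : C * star S * (S * C) = C * (C * C) := by
      rw [mul_assoc, ← mul_assoc (star S), k1]
    rw [t1, t2, t3, t4]
    abel
  have h0 := (CStarRing.star_mul_self_eq_zero_iff _).mp hD
  exact sub_eq_zero.mp h0

/-- An operator `T` is n-quasinormal (i.e. `Tⁿ` commutes with `T*ⁿTⁿ`) if and only if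
`T*ⁿᵏ Tⁿᵏ = (T*ⁿ Tⁿ)ᵏ` for all `k = 0, 1, 2, …`. -/
theorem nQuasinormal_iff_power_identity
    {H : Type*} [NormedAddCommGroup H] [InnerProductSpace ℂ H] [CompleteSpace H]
    (n : ℕ) (T : H →L[ℂ] H) :
    T ^ n * (star (T ^ n) * T ^ n) = (star (T ^ n) * T ^ n) * T ^ n ↔
      ∀ k : ℕ, star (T ^ (n * k)) * T ^ (n * k) = (star (T ^ n) * T ^ n) ^ k := by
  set S := T ^ n with hS
  constructor
  · intro h k
    have hc : Commute (star S * S) S := Commute.symm (h : Commute S (star S * S))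
    have key : ∀ k : ℕ, star (S ^ k) * S ^ k = (star S * S) ^ k := by
      intro k
      induction k with
      | zero => simp
      | succ k ih =>
        calc star (S ^ (k + 1)) * S ^ (k + 1)
            = star S * (star (S ^ k) * S ^ k) * S := by
              rw [pow_succ, star_mul]; noncomm_ring
          _ = star S * (star S * S) ^ k * S := by rw [ih]
          _ = star S * S * (star S * S) ^ k := by
              rw [mul_assoc, (hc.pow_left k).eq, ← mul_assoc]
          _ = (star S * S) ^ (k + 1) := by rw [pow_succ']
    rw [pow_mul, ← hS]
    exact key k
  · intro h
    have h' : ∀ k : ℕ, star S ^ k * S ^ k = (star S * S) ^ k := by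
      intro k
      have hk := h k
      rw [pow_mul, ← hS, star_pow] at hk
      exact hk
    have h2 := h' 2
    have h3 := h' 3
    have k2 : star S * (star S * S) * S = (star S * S) * (star S * S) := by
      calc star S * (star S * S) * S = star S ^ 2 * S ^ 2 := by noncomm_ring
        _ = (star S * S) ^ 2 := h2
        _ = (star S * S) * (star S * S) := by noncomm_ring
    have k3 : star S * ((star S * S) * (star S * S)) * S
        = (star S * S) * ((star S * S) * (star S * S)) := by
      calc star S * ((star S * S) * (star S * S)) * S
          = star S * (star S ^ 2 * S ^ 2) * S := by rw [h2]; noncomm_ring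
        _ = star S ^ 3 * S ^ 3 := by noncomm_ring
        _ = (star S * S) ^ 3 := h3
        _ = (star S * S) * ((star S * S) * (star S * S)) := by noncomm_ring
    have hCstar : star (star S * S) = star S * S := by rw [star_mul, star_star]
    exact (quasi_aux S (star S * S) hCstar rfl k2 k3).symm
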